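/- Let B be an n×n real symmetric positive definite matrix and let P_1, …, P_n be the associated lumped preconditioners. Then every P_i is symmetric positive definite and the chain 𝓛(B) = P_1 ⪰ P_2 ⪰ … ⪰ P_{n−1} ⪰ P_n = B holds in the Loewner order; in particular P_i ⪰ P_j ⪰ B whenever i ≤ j. -/

import Mathlib

/-! For symmetric `E`, lumping dominates `E` in the Loewner order:
`xᵀ (𝓛(E) - E) x = ½ ∑ⱼₖ (|Eⱼₖ| (xⱼ² + xₖ²) - 2 Eⱼₖ xⱼ xₖ) ≥ 0`.
Now `P_i - B = 𝓛(R_i) - R_i`, and for `i ≤ j` the remainder splits as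
`R_i = R_j + (D_j - D_i)` with disjoint supports, so `𝓛` is additive on it and
`P_i - P_j = 𝓛(D_j - D_i) - (D_j - D_i)`. Both differences are therefore positive
semidefinite, and `P_i = B + (P_i - B)` is positive definite. -/

open Matrix

/-- The Euclidean norm of a vector. -/
noncomputable def enorm {m : Type*} [Fintype m] (v : m → ℝ) : ℝ :=
  Real.sqrt (∑ i, (v i) ^ 2)

/-- The square root of a positive semidefinite real matrix, as `Matrix.PosSemidef.sqrt` was
defined in older Mathlib: `U * diagonal (√ ∘ eigenvalues) * star U`. -/
noncomputable def posSemidefSqrt {m : Type*} [Fintype m] [DecidableEq m] {A : Matrix m m ℝ}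
    (hA : A.PosSemidef) : Matrix m m ℝ :=
  (hA.1.eigenvectorUnitary : Matrix m m ℝ) * diagonal (Real.sqrt ∘ hA.1.eigenvalues) *
    star (hA.1.eigenvectorUnitary : Matrix m m ℝ)

theorem posSemidefSqrt_isHermitian {m : Type*} [Fintype m] [DecidableEq m] {A : Matrix m m ℝ}
    (hA : A.PosSemidef) : (posSemidefSqrt hA).IsHermitian := by
  show (posSemidefSqrt hA)ᴴ = posSemidefSqrt hA
  simp only [posSemidefSqrt, conjTranspose_mul, diagonal_conjTranspose, star_trivial,
    Matrix.star_eq_conjTranspose, conjTranspose_conjTranspose, Matrix.mul_assoc]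

/-- The `k`-th smallest generalized eigenvalue (counted with multiplicity) of the
symmetric pencil `(A, B)` with `B` positive definite, i.e. the `k`-th smallest root of
`det (A - λ B) = 0`.  It is defined as the `k`-th smallest eigenvalue of the Hermitian
matrix `√(B⁻¹) * A * √(B⁻¹)`, which is similar to `B⁻¹ * A`.  Junk value `0` is returned
if `A` is not symmetric or `B` is not positive definite. -/
noncomputable def genEig {m : Type*} [Fintype m] [DecidableEq m]
    (A B : Matrix m m ℝ) (k : Fin (Fintype.card m)) : ℝ :=
  letI := Classical.propDecidable
  if h : A.IsHermitian ∧ B.PosDef then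
    let S : Matrix m m ℝ := posSemidefSqrt (h.2.inv).posSemidef
    have hS : S.IsHermitian := posSemidefSqrt_isHermitian (h.2.inv).posSemidef
    have hC : (S * A * S).IsHermitian := by
      show (S * A * S)ᴴ = S * A * S
      rw [conjTranspose_mul, conjTranspose_mul, hS.eq, h.1.eq, Matrix.mul_assoc]
    let f : Fin (Fintype.card m) → ℝ := hC.eigenvalues₀
    f (Tuple.sort f k)
  else 0

/-- The `k`-th smallest generalized eigenvalue of a pencil of `n × n` matrices,
indexed by `Fin n`.  `genEigFin A B 0` is the smallest one, `λ_1(A,B)`, and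
`genEigFin A B (Fin.last _)` is the largest one, `λ_n(A,B)`. -/
noncomputable def genEigFin {n : ℕ} (A B : Matrix (Fin n) (Fin n) ℝ) (k : Fin n) : ℝ :=
  genEig A B (Fin.cast (Fintype.card_fin n).symm k)

/-- The (row-sum) lumping operator: `lump B` is the diagonal matrix whose `i`-th
diagonal entry is the sum of the absolute values of the entries of the `i`-th row of `B`. -/
noncomputable def lump {m : Type*} [Fintype m] [DecidableEq m]
    (B : Matrix m m ℝ) : Matrix m m ℝ :=
  Matrix.diagonal fun i => ∑ j, |B i j|

/-- The banded part `D_i` of a matrix: it keeps all sub- and super-diagonals of index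
smaller than `i` (i.e. the entries with `|j - k| < i`) and sets the rest to zero. -/
def diagBand {n : ℕ} (B : Matrix (Fin n) (Fin n) ℝ) (i : ℕ) : Matrix (Fin n) (Fin n) ℝ :=
  Matrix.of fun j k => if |((j : ℕ) : ℤ) - ((k : ℕ) : ℤ)| < (i : ℤ) then B j k else 0

/-- The lumped preconditioner `P_i = D_i + 𝓛(R_i)` where `B = D_i + R_i`, `D_i` being the
banded part of `B` of bandwidth `i` and `R_i` the remainder. -/
noncomputable def precond {n : ℕ} (B : Matrix (Fin n) (Fin n) ℝ) (i : ℕ) :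
    Matrix (Fin n) (Fin n) ℝ :=
  diagBand B i + lump (B - diagBand B i)

section Lumping

variable {m : Type*} [Fintype m] [DecidableEq m]

theorem dotProduct_lump_sub_mulVec (E : Matrix m m ℝ) (x : m → ℝ) :
    x ⬝ᵥ (lump E - E) *ᵥ x = ∑ j, ∑ k, (|E j k| * x j ^ 2 - E j k * (x j * x k)) := by
  have hlump : x ⬝ᵥ lump E *ᵥ x = ∑ j, ∑ k, |E j k| * x j ^ 2 := by
    simp only [lump, dotProduct, mulVec_diagonal]
    exact Finset.sum_congr rfl fun j _ => by rw [← Finset.sum_mul]; ring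
  have hE : x ⬝ᵥ E *ᵥ x = ∑ j, ∑ k, E j k * (x j * x k) := by
    simp only [dotProduct, mulVec, Finset.mul_sum]
    exact Finset.sum_congr rfl fun j _ => Finset.sum_congr rfl fun k _ => by ring
  simp only [sub_mulVec, dotProduct_sub, hlump, hE, ← Finset.sum_sub_distrib]

theorem lump_sub_posSemidef {E : Matrix m m ℝ} (hE : E.IsHermitian) :
    (lump E - E).PosSemidef := by
  have hsymm : ∀ j k, E k j = E j k := fun j k => by simpa using hE.apply j k
  refine .of_dotProduct_mulVec_nonneg ((isHermitian_diagonal_of_self_adjoint _ ?_).sub hE)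
    fun x => ?_
  · exact funext fun _ => star_trivial _
  rw [star_trivial, dotProduct_lump_sub_mulVec]
  set t : m → m → ℝ := fun j k => |E j k| * x j ^ 2 - E j k * (x j * x k)
  have hpair : ∀ j k, 0 ≤ t j k + t k j := fun j k => by
    simp only [t, hsymm j k]
    nlinarith [sq_nonneg (x j - x k), sq_nonneg (x j + x k), le_abs_self (E j k),
      neg_abs_le (E j k)]
  have hsum : 0 ≤ ∑ j, ∑ k, (t j k + t k j) :=
    Finset.sum_nonneg fun j _ => Finset.sum_nonneg fun k _ => hpair j k
  have hswap : ∑ j, ∑ k, t k j = ∑ j, ∑ k, t j k := Finset.sum_comm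
  simp only [Finset.sum_add_distrib, hswap] at hsum
  linarith

theorem lump_add_of_disjoint {A C : Matrix m m ℝ} (h : ∀ r k, A r k = 0 ∨ C r k = 0) :
    lump (A + C) = lump A + lump C := by
  simp only [lump, diagonal_add]
  congr 1
  funext r
  simp only [← Finset.sum_add_distrib]
  refine Finset.sum_congr rfl fun k _ => ?_
  rcases h r k with hA | hC <;> simp [*]

theorem lump_sub_diagonal_diag_add (A : Matrix m m ℝ) :
    lump (A - diagonal A.diag) + diagonal (fun r => |A r r|) = lump A := by
  rw [lump, lump, diagonal_add]
  congr 1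
  funext r
  rw [Fintype.sum_eq_add_sum_compl r, Fintype.sum_eq_add_sum_compl r (fun k => |A r k|)]
  have hoff : ∀ k ∈ ({r}ᶜ : Finset m), |(A - diagonal A.diag) r k| = |A r k| := fun k hk => by
    rw [Matrix.sub_apply, diagonal_apply_ne _ (by simpa [eq_comm] using hk), sub_zero]
  rw [Finset.sum_congr rfl hoff, Matrix.sub_apply, diagonal_apply_eq, diag_apply, sub_self,
    abs_zero, zero_add, add_comm]

end Lumping

section Band

variable {n : ℕ} (B : Matrix (Fin n) (Fin n) ℝ)

theorem diagBand_of_le {i : ℕ} (h : n ≤ i) : diagBand B i = B := by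
  ext j k
  simp only [diagBand, of_apply, abs_lt]
  rw [if_pos (by omega)]

theorem diagBand_one : diagBand B 1 = diagonal B.diag := by
  ext j k
  simp only [diagBand, of_apply, diagonal_apply, diag_apply, Nat.cast_one, Int.abs_lt_one_iff,
    sub_eq_zero, Nat.cast_inj, Fin.val_inj]
  split_ifs with h <;> simp [h]

theorem lump_sub_diagBand_of_le {i j : ℕ} (hij : i ≤ j) :
    lump (B - diagBand B i) = lump (B - diagBand B j) + lump (diagBand B j - diagBand B i) := by
  rw [← lump_add_of_disjoint, sub_add_sub_cancel]
  intro r k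
  simp only [Matrix.sub_apply, diagBand, of_apply]
  split_ifs <;> first | (exfalso; omega) | simp

theorem precond_sub_self (i : ℕ) :
    precond B i - B = lump (B - diagBand B i) - (B - diagBand B i) := by
  unfold precond; abel

theorem precond_sub_precond {i j : ℕ} (hij : i ≤ j) :
    precond B i - precond B j =
      lump (diagBand B j - diagBand B i) - (diagBand B j - diagBand B i) := by
  unfold precond; rw [lump_sub_diagBand_of_le B hij]; abel

theorem precond_of_le {i : ℕ} (h : n ≤ i) : precond B i = B := by
  rw [precond, diagBand_of_le B h, sub_self, lump, add_eq_left]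
  simp

end Band

section Loewner

variable {n : ℕ} {B : Matrix (Fin n) (Fin n) ℝ}

theorem precond_one (h : ∀ r, 0 ≤ B r r) : precond B 1 = lump B := by
  have hdiag : diagonal (fun r => |B r r|) = diagonal B.diag :=
    congrArg diagonal (funext fun r => abs_of_nonneg (h r))
  rw [precond, diagBand_one, ← lump_sub_diagonal_diag_add B, hdiag, add_comm]

theorem diagBand_isHermitian (hB : B.IsHermitian) (i : ℕ) :
    (diagBand B i).IsHermitian := by
  ext j k
  simp only [conjTranspose_apply, diagBand, of_apply, star_trivial, abs_sub_comm (k : ℤ)]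
  split_ifs <;> simp [← hB.apply j k]

theorem precond_sub_self_posSemidef (hB : B.IsHermitian) (i : ℕ) :
    (precond B i - B).PosSemidef := by
  rw [precond_sub_self]
  exact lump_sub_posSemidef (hB.sub (diagBand_isHermitian hB i))

theorem precond_sub_precond_posSemidef (hB : B.IsHermitian) {i j : ℕ} (hij : i ≤ j) :
    (precond B i - precond B j).PosSemidef := by
  rw [precond_sub_precond B hij]
  exact lump_sub_posSemidef ((diagBand_isHermitian hB j).sub (diagBand_isHermitian hB i))

theorem posDef_precond (hB : B.PosDef) (i : ℕ) : (precond B i).PosDef := by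
  simpa using hB.add_posSemidef (precond_sub_self_posSemidef hB.isHermitian i)

end Loewner

/-- every `P_i` is SPD and `𝓛(B) = P_1 ⪰ P_2 ⪰ … ⪰ P_n = B` in the
Loewner order; in particular `P_i ⪰ P_j ⪰ B` whenever `i ≤ j`. -/
theorem stmt_16 {n : ℕ} (B : Matrix (Fin (n + 1)) (Fin (n + 1)) ℝ) (hB : B.PosDef) :
    (∀ i : ℕ, 1 ≤ i → i ≤ n + 1 → (precond B i).PosDef) ∧
    precond B 1 = lump B ∧
    precond B (n + 1) = B ∧
    (∀ i j : ℕ, 1 ≤ i → i ≤ j → j ≤ n + 1 → (precond B i - precond B j).PosSemidef) ∧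
    (∀ i : ℕ, 1 ≤ i → i ≤ n + 1 → (precond B i - B).PosSemidef) :=
  ⟨fun i _ _ => posDef_precond hB i,
    precond_one fun _ => hB.diag_pos.le,
    precond_of_le B le_rfl,
    fun _ _ _ hij _ => precond_sub_precond_posSemidef hB.isHermitian hij,
    fun i _ _ => precond_sub_self_posSemidef hB.isHermitian i⟩
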